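/- (Discrete energy conservation of Splitting method II.) Let I, J, K ≥ 3 be odd integers, ε, μ, τ, h_x, h_y, h_z > 0 and λ ∈ ℝ. Let E_m⁰, H_m⁰, E_m^{[1]}, H_m^{[1]}, E_m^{[2]}, H_m^{[2]}, E_m^{[3]}, H_m^{[3]}, E_m¹, H_m¹ : Fin I × Fin J × Fin K → ℝ (m = 1,2,3) be grid fields and θ : Fin I × Fin J × Fin K → ℝ. Assume: (Stage 1) E₁^{[1]} = E₁⁰ and H₁^{[1]} = H₁⁰; for every (j,k), the stacked x-slice vector (ε(E₂^{[1]} − E₂⁰)_{·,j,k}, μ(H₃^{[1]} − H₃⁰)_{·,j,k}) equals −(τ/h_x)·𝒜_I⁻¹ℬ_I applied to ((E₂^{[1]} + E₂⁰)/2, (H₃^{[1]} + H₃⁰)/2)_{·,j,k}, and the stacked x-slice vector for the pair (E₃, H₂) satisfies the same relation with factor +τ/h_x. (Stage 2) E₂^{[2]} = E₂^{[1]} and H₂^{[2]} = H₂^{[1]}; for every (i,k), the stacked y-slice relation holds for the pair (E₃, H₁) with factor −τ/h_y and matrices 𝒜_J⁻¹ℬ_J, and for the pair (E₁, H₃) with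 factor +τ/h_y. (Stage 3) E₃^{[3]} = E₃^{[2]} and H₃^{[3]} = H₃^{[2]}; for every (i,j), the stacked z-slice relation holds for the pair (E₁, H₂) with factor −τ/h_z and matrices 𝒜_K⁻¹ℬ_K, and for the pair (E₂, H₁) with factor +τ/h_z. (Stage 4) at every grid point (i,j,k), with c = cos(λθ(i,j,k)/√(εμ)) and s = sin(λθ(i,j,k)/√(εμ)), one has E_m¹ = c E_m^{[3]} − √(μ/ε) s H_m^{[3]} and H_m¹ = √(ε/μ) s E_m^{[3]} + c H_m^{[3]} for m = 1,2,3. Then the discrete energy is conserved: ℰ(E¹,H¹) = ℰ(E⁰,H⁰). -/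

import Mathlib

/-!
Every stage of the splitting is energy-neutral. The first three stages are implicit-midpoint
steps `D (x' - x) = M (x' + x) / 2` with `D = diag(ε, μ)` and `M = c 𝒜⁻¹ℬ`; since `𝒜` is
symmetric, `ℬ` is skew-symmetric and the two commute (both are circulant), `M` is
skew-symmetric, so pairing the step with the midpoint `(x' + x) / 2` gives
`ε ‖u'‖² + μ ‖v'‖² = ε ‖u‖² + μ ‖v‖²` on every grid line. Each stage updates two pairs of
components this way and leaves the third pair untouched. The last stage rotates `(E_m, H_m)`
pointwise by a map that is orthogonal for the weighted norm `ε E² + μ H²`.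
-/

open Matrix

/-- The n×n circulant matrix with 1 on the diagonal and 1/2 on the (mod n)
super- and sub-diagonals. -/
noncomputable def matA (n : ℕ) [NeZero n] : Matrix (Fin n) (Fin n) ℝ :=
  fun i j => if j = i then 1 else if j = i + 1 ∨ j = i - 1 then (1 : ℝ)/2 else 0

/-- The n×n circulant central-difference matrix with 1 on the (mod n)
super-diagonal and -1 on the (mod n) sub-diagonal. -/
def matB (n : ℕ) [NeZero n] : Matrix (Fin n) (Fin n) ℝ :=
  fun i j => if j = i + 1 then 1 else if j = i - 1 then -1 else 0

/-- The 2n×2n block-diagonal matrix diag(A, A). -/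
noncomputable def calA (n : ℕ) [NeZero n] : Matrix (Fin n ⊕ Fin n) (Fin n ⊕ Fin n) ℝ :=
  Matrix.fromBlocks (matA n) 0 0 (matA n)

/-- The 2n×2n block matrix [[0, B],[B, 0]]. -/
def calB (n : ℕ) [NeZero n] : Matrix (Fin n ⊕ Fin n) (Fin n ⊕ Fin n) ℝ :=
  Matrix.fromBlocks 0 (matB n) (matB n) 0

/-- One implicit-midpoint stage relation along a one-dimensional slice:
the stacked vector (ε(u'−u), μ(v'−v)) equals c · 𝒜⁻¹ℬ applied to the
stacked midpoint vector ((u'+u)/2, (v'+v)/2). -/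
noncomputable def stageRel (n : ℕ) [NeZero n] (ε μ c : ℝ)
    (u u' v v' : Fin n → ℝ) : Prop :=
  Sum.elim (fun i => ε * (u' i - u i)) (fun i => μ * (v' i - v i)) =
    c • (((calA n)⁻¹ * calB n) *ᵥ
      Sum.elim (fun i => (u' i + u i) / 2) (fun i => (v' i + v i) / 2))

/-- The discrete electromagnetic energy of grid fields (E₁,E₂,E₃), (H₁,H₂,H₃). -/
noncomputable def discreteEnergy {I J K : ℕ} (ε μ : ℝ)
    (E1 E2 E3 H1 H2 H3 : Fin I × Fin J × Fin K → ℝ) : ℝ :=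
  ε * (∑ p, E1 p ^ 2 + ∑ p, E2 p ^ 2 + ∑ p, E3 p ^ 2) +
    μ * (∑ p, H1 p ^ 2 + ∑ p, H2 p ^ 2 + ∑ p, H3 p ^ 2)

theorem Commute.nonsing_inv_left {ι R : Type*} [Fintype ι] [DecidableEq ι] [CommRing R]
    {A B : Matrix ι ι R} (h : Commute A B) : Commute A⁻¹ B := by
  rw [nonsing_inv_eq_ringInverse]
  by_cases hA : IsUnit A
  · obtain ⟨u, rfl⟩ := hA
    rw [Ring.inverse_unit]
    exact h.units_inv_left
  · rw [Ring.inverse_non_unit _ hA]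
    exact Commute.zero_left B

namespace Matrix

variable {ι R : Type*} [Fintype ι] [CommRing R]

theorem transpose_nonsing_inv_mul_eq_neg [DecidableEq ι] {A B : Matrix ι ι R} (hA : A.IsSymm)
    (hB : Bᵀ = -B) (h : Commute A B) : (A⁻¹ * B)ᵀ = -(A⁻¹ * B) := by
  rw [transpose_mul, transpose_nonsing_inv, hA.eq, hB, neg_mul, h.nonsing_inv_left.eq]

theorem dotProduct_mulVec_self_eq_zero [IsAddTorsionFree R] {M : Matrix ι ι R} (hM : Mᵀ = -M)
    (v : ι → R) : v ⬝ᵥ M *ᵥ v = 0 := by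
  have h := dotProduct_transpose_mulVec M v v
  rw [hM, neg_mulVec, dotProduct_neg] at h
  exact self_eq_neg.mp h.symm

end Matrix

theorem eq_add_iff_sub_eq_neg {G : Type*} [AddCommGroup G] {a b c : G} :
    b = a + c ↔ a - b = -c := by
  grind

theorem eq_sub_iff_sub_eq {G : Type*} [AddCommGroup G] {a b c : G} : b = a - c ↔ a - b = c := by
  grind

section Circulant

variable (n : ℕ) [NeZero n]

theorem matA_eq_circulant : matA n =
    circulant fun d => if d = 0 then 1 else if d = -1 ∨ d = 1 then (1 : ℝ) / 2 else 0 := by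
  ext i j
  have h0 : j = i ↔ i - j = 0 := by rw [sub_eq_zero, eq_comm]
  simp only [matA, circulant_apply, h0, eq_add_iff_sub_eq_neg, eq_sub_iff_sub_eq]

theorem matB_eq_circulant : matB n =
    circulant fun d => if d = -1 then 1 else if d = 1 then (-1 : ℝ) else 0 := by
  ext i j
  simp only [matB, circulant_apply, eq_add_iff_sub_eq_neg, eq_sub_iff_sub_eq]

theorem isSymm_matA : (matA n).IsSymm := by
  rw [IsSymm, matA_eq_circulant, transpose_circulant]
  congr 1
  funext d
  simp only [neg_eq_iff_eq_neg (a := d), neg_zero, neg_neg, or_comm]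

open scoped Fin.CommRing in
theorem transpose_matB (hn : 3 ≤ n) : (matB n)ᵀ = -matB n := by
  have : Fact (2 < n) := ⟨hn⟩
  have hne : (-1 : Fin n) ≠ 1 := CharP.neg_one_ne_one (Fin n) n
  rw [matB_eq_circulant, transpose_circulant, ← circulant_neg]
  congr 1
  funext d
  simp only [neg_eq_iff_eq_neg (a := d), Pi.neg_apply]
  by_cases h1 : d = 1 <;> by_cases h2 : d = -1 <;> simp_all

theorem commute_matA_matB : Commute (matA n) (matB n) := by
  rw [matA_eq_circulant, matB_eq_circulant]
  exact Fin.circulant_mul_comm _ _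

theorem transpose_calA_inv_mul_calB (hn : 3 ≤ n) :
    ((calA n)⁻¹ * calB n)ᵀ = -((calA n)⁻¹ * calB n) := by
  refine transpose_nonsing_inv_mul_eq_neg ?_ ?_ ?_
  · simp [calA, IsSymm, fromBlocks_transpose, (isSymm_matA n).eq]
  · simp [calB, fromBlocks_transpose, transpose_matB n hn, fromBlocks_neg]
  · simp [Commute, SemiconjBy, calA, calB, fromBlocks_multiply, (commute_matA_matB n).eq]

end Circulant

theorem sum_mul_sq_eq_of_midpoint {ι : Type*} [Fintype ι] {M : Matrix ι ι ℝ} (hM : Mᵀ = -M)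
    {w x x' : ι → ℝ} (h : (fun i => w i * (x' i - x i)) = M *ᵥ fun i => (x' i + x i) / 2) :
    ∑ i, w i * x' i ^ 2 = ∑ i, w i * x i ^ 2 := by
  have h0 := congrArg ((fun i => (x' i + x i) / 2) ⬝ᵥ ·) h
  rw [dotProduct_mulVec_self_eq_zero hM] at h0
  rw [← sub_eq_zero, ← Finset.sum_sub_distrib]
  calc ∑ i, (w i * x' i ^ 2 - w i * x i ^ 2)
      = 2 * ∑ i, (x' i + x i) / 2 * (w i * (x' i - x i)) := by
        rw [Finset.mul_sum]
        exact Finset.sum_congr rfl fun i _ => by ring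
    _ = 0 := by rw [← dotProduct, h0, mul_zero]

noncomputable def pairEnergy {P : Type*} [Fintype P] (ε μ : ℝ) (u v : P → ℝ) : ℝ :=
  ε * ∑ p, u p ^ 2 + μ * ∑ p, v p ^ 2

theorem stageRel.pairEnergy_eq {n : ℕ} [NeZero n] (hn : 3 ≤ n) {ε μ c : ℝ}
    {u u' v v' : Fin n → ℝ} (h : stageRel n ε μ c u u' v v') :
    pairEnergy ε μ u' v' = pairEnergy ε μ u v := by
  have hM : (c • ((calA n)⁻¹ * calB n))ᵀ = -(c • ((calA n)⁻¹ * calB n)) := by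
    rw [transpose_smul, transpose_calA_inv_mul_calB n hn, smul_neg]
  have key := sum_mul_sq_eq_of_midpoint hM (w := Sum.elim (fun _ => ε) fun _ => μ)
    (x := Sum.elim u v) (x' := Sum.elim u' v') ?_
  · simpa only [pairEnergy, Fintype.sum_sum_type, Sum.elim_inl, Sum.elim_inr, Finset.mul_sum]
      using key
  rw [stageRel, ← smul_mulVec] at h
  convert h using 1
  · ext (i | i) <;> rfl
  · congr 1
    ext (i | i) <;> rfl

theorem pairEnergy_eq_of_slices {P α : Type*} [Fintype P] [Fintype α] {n : ℕ} [NeZero n]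
    (hn : 3 ≤ n) (e : α × Fin n ≃ P) {ε μ c : ℝ} {u u' v v' : P → ℝ}
    (h : ∀ a, stageRel n ε μ c (fun i => u (e (a, i))) (fun i => u' (e (a, i)))
      (fun i => v (e (a, i))) (fun i => v' (e (a, i)))) :
    pairEnergy ε μ u' v' = pairEnergy ε μ u v := by
  have hsum (f : P → ℝ) : ∑ p, f p = ∑ a, ∑ i, f (e (a, i)) := by
    rw [← e.sum_comp, Fintype.sum_prod_type]
  have hslices (u v : P → ℝ) : pairEnergy ε μ u v =
      ∑ a, pairEnergy ε μ (fun i => u (e (a, i))) (fun i => v (e (a, i))) := by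
    simp only [pairEnergy, Finset.sum_add_distrib, ← Finset.mul_sum, hsum]
  rw [hslices u' v', hslices u v]
  exact Finset.sum_congr rfl fun a _ => (h a).pairEnergy_eq hn

section Slices

variable {I J K : ℕ} {ε μ c : ℝ} {u u' v v' : Fin I × Fin J × Fin K → ℝ}

theorem pairEnergy_eq_of_xSlices [NeZero I] (hI : 3 ≤ I)
    (h : ∀ j k, stageRel I ε μ c (fun i => u (i, j, k)) (fun i => u' (i, j, k))
      (fun i => v (i, j, k)) (fun i => v' (i, j, k))) :
    pairEnergy ε μ u' v' = pairEnergy ε μ u v :=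
  pairEnergy_eq_of_slices hI (Equiv.prodComm _ _) fun a => h a.1 a.2

theorem pairEnergy_eq_of_ySlices [NeZero J] (hJ : 3 ≤ J)
    (h : ∀ i k, stageRel J ε μ c (fun j => u (i, j, k)) (fun j => u' (i, j, k))
      (fun j => v (i, j, k)) (fun j => v' (i, j, k))) :
    pairEnergy ε μ u' v' = pairEnergy ε μ u v :=
  pairEnergy_eq_of_slices hJ
    ((Equiv.prodAssoc _ _ _).trans ((Equiv.refl _).prodCongr (Equiv.prodComm _ _)))
    fun a => h a.1 a.2

theorem pairEnergy_eq_of_zSlices [NeZero K] (hK : 3 ≤ K)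
    (h : ∀ i j, stageRel K ε μ c (fun k => u (i, j, k)) (fun k => u' (i, j, k))
      (fun k => v (i, j, k)) (fun k => v' (i, j, k))) :
    pairEnergy ε μ u' v' = pairEnergy ε μ u v :=
  pairEnergy_eq_of_slices hK (Equiv.prodAssoc _ _ _) fun a => h a.1 a.2

end Slices

/-- The cross terms cancel because `ε √(μ/ε) = μ √(ε/μ) = √(εμ)`. -/
theorem rotation_energy_eq {ε μ : ℝ} (hε : 0 < ε) (hμ : 0 < μ) (t E H : ℝ) :
    ε * (Real.cos t * E - √(μ / ε) * Real.sin t * H) ^ 2 +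
      μ * (√(ε / μ) * Real.sin t * E + Real.cos t * H) ^ 2 = ε * E ^ 2 + μ * H ^ 2 := by
  obtain ⟨a, ha, rfl⟩ : ∃ a, 0 < a ∧ a ^ 2 = ε := ⟨√ε, Real.sqrt_pos.2 hε, Real.sq_sqrt hε.le⟩
  obtain ⟨b, hb, rfl⟩ : ∃ b, 0 < b ∧ b ^ 2 = μ := ⟨√μ, Real.sqrt_pos.2 hμ, Real.sq_sqrt hμ.le⟩
  rw [← div_pow, ← div_pow, Real.sqrt_sq (by positivity), Real.sqrt_sq (by positivity)]
  field_simp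
  linear_combination (a ^ 2 * E ^ 2 + b ^ 2 * H ^ 2) * Real.sin_sq_add_cos_sq t

theorem pairEnergy_eq_of_rotation {P : Type*} [Fintype P] {ε μ : ℝ} (hε : 0 < ε) (hμ : 0 < μ)
    {t E H E' H' : P → ℝ}
    (hE : ∀ p, E' p = Real.cos (t p) * E p - √(μ / ε) * Real.sin (t p) * H p)
    (hH : ∀ p, H' p = √(ε / μ) * Real.sin (t p) * E p + Real.cos (t p) * H p) :
    pairEnergy ε μ E' H' = pairEnergy ε μ E H := by
  simp only [pairEnergy, Finset.mul_sum, ← Finset.sum_add_distrib, hE, hH,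
    rotation_energy_eq hε hμ]

theorem splittingII_energy_conservation_general
    (I J K : ℕ) [NeZero I] [NeZero J] [NeZero K]
    (hI : 3 ≤ I) (hJ : 3 ≤ J) (hK : 3 ≤ K)
    (ε μ τ hx hy hz : ℝ) (hε : 0 < ε) (hμ : 0 < μ)
    (lam : ℝ)
    (E1n E2n E3n H1n H2n H3n E1a E2a E3a H1a H2a H3a
      E1b E2b E3b H1b H2b H3b E1c E2c E3c H1c H2c H3c
      E1f E2f E3f H1f H2f H3f : Fin I × Fin J × Fin K → ℝ)
    (θ : Fin I × Fin J × Fin K → ℝ)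
    -- Stage 1: from (Eⁿ, Hⁿ) to (E^{[1]}, H^{[1]})
    (hs1E1 : E1a = E1n) (hs1H1 : H1a = H1n)
    (hs1x1 : ∀ (j : Fin J) (k : Fin K), stageRel I ε μ (-(τ / hx))
      (fun i => E2n (i, j, k)) (fun i => E2a (i, j, k))
      (fun i => H3n (i, j, k)) (fun i => H3a (i, j, k)))
    (hs1x2 : ∀ (j : Fin J) (k : Fin K), stageRel I ε μ (τ / hx)
      (fun i => E3n (i, j, k)) (fun i => E3a (i, j, k))
      (fun i => H2n (i, j, k)) (fun i => H2a (i, j, k)))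
    -- Stage 2: from (E^{[1]}, H^{[1]}) to (E^{[2]}, H^{[2]})
    (hs2E2 : E2b = E2a) (hs2H2 : H2b = H2a)
    (hs2y1 : ∀ (i : Fin I) (k : Fin K), stageRel J ε μ (-(τ / hy))
      (fun j => E3a (i, j, k)) (fun j => E3b (i, j, k))
      (fun j => H1a (i, j, k)) (fun j => H1b (i, j, k)))
    (hs2y2 : ∀ (i : Fin I) (k : Fin K), stageRel J ε μ (τ / hy)
      (fun j => E1a (i, j, k)) (fun j => E1b (i, j, k))
      (fun j => H3a (i, j, k)) (fun j => H3b (i, j, k)))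
    -- Stage 3: from (E^{[2]}, H^{[2]}) to (E^{[3]}, H^{[3]})
    (hs3E3 : E3c = E3b) (hs3H3 : H3c = H3b)
    (hs3z1 : ∀ (i : Fin I) (j : Fin J), stageRel K ε μ (-(τ / hz))
      (fun k => E1b (i, j, k)) (fun k => E1c (i, j, k))
      (fun k => H2b (i, j, k)) (fun k => H2c (i, j, k)))
    (hs3z2 : ∀ (i : Fin I) (j : Fin J), stageRel K ε μ (τ / hz)
      (fun k => E2b (i, j, k)) (fun k => E2c (i, j, k))
      (fun k => H1b (i, j, k)) (fun k => H1c (i, j, k)))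
    -- Stage 4: pointwise rotation by the noise increment
    (hs4E1 : ∀ p, E1f p = Real.cos (lam * θ p / Real.sqrt (ε * μ)) * E1c p -
      Real.sqrt (μ / ε) * Real.sin (lam * θ p / Real.sqrt (ε * μ)) * H1c p)
    (hs4E2 : ∀ p, E2f p = Real.cos (lam * θ p / Real.sqrt (ε * μ)) * E2c p -
      Real.sqrt (μ / ε) * Real.sin (lam * θ p / Real.sqrt (ε * μ)) * H2c p)
    (hs4E3 : ∀ p, E3f p = Real.cos (lam * θ p / Real.sqrt (ε * μ)) * E3c p -
      Real.sqrt (μ / ε) * Real.sin (lam * θ p / Real.sqrt (ε * μ)) * H3c p)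
    (hs4H1 : ∀ p, H1f p = Real.sqrt (ε / μ) *
      Real.sin (lam * θ p / Real.sqrt (ε * μ)) * E1c p +
      Real.cos (lam * θ p / Real.sqrt (ε * μ)) * H1c p)
    (hs4H2 : ∀ p, H2f p = Real.sqrt (ε / μ) *
      Real.sin (lam * θ p / Real.sqrt (ε * μ)) * E2c p +
      Real.cos (lam * θ p / Real.sqrt (ε * μ)) * H2c p)
    (hs4H3 : ∀ p, H3f p = Real.sqrt (ε / μ) *
      Real.sin (lam * θ p / Real.sqrt (ε * μ)) * E3c p +
      Real.cos (lam * θ p / Real.sqrt (ε * μ)) * H3c p) :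
    discreteEnergy ε μ E1f E2f E3f H1f H2f H3f =
      discreteEnergy ε μ E1n E2n E3n H1n H2n H3n := by
  subst hs1E1 hs1H1 hs2E2 hs2H2 hs3E3 hs3H3
  have x1 := pairEnergy_eq_of_xSlices hI hs1x1
  have x2 := pairEnergy_eq_of_xSlices hI hs1x2
  have y1 := pairEnergy_eq_of_ySlices hJ hs2y1
  have y2 := pairEnergy_eq_of_ySlices hJ hs2y2
  have z1 := pairEnergy_eq_of_zSlices hK hs3z1
  have z2 := pairEnergy_eq_of_zSlices hK hs3z2
  have r1 := pairEnergy_eq_of_rotation hε hμ hs4E1 hs4H1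
  have r2 := pairEnergy_eq_of_rotation hε hμ hs4E2 hs4H2
  have r3 := pairEnergy_eq_of_rotation hε hμ hs4E3 hs4H3
  unfold pairEnergy at x1 x2 y1 y2 z1 z2 r1 r2 r3
  unfold discreteEnergy
  linarith

/-- Discrete energy conservation of Splitting method II. -/
theorem splittingII_energy_conservation
    (I J K : ℕ) [NeZero I] [NeZero J] [NeZero K]
    (hI : 3 ≤ I) (hJ : 3 ≤ J) (hK : 3 ≤ K)
    (hIo : Odd I) (hJo : Odd J) (hKo : Odd K)
    (ε μ τ hx hy hz : ℝ) (hε : 0 < ε) (hμ : 0 < μ) (hτ : 0 < τ)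
    (hhx : 0 < hx) (hhy : 0 < hy) (hhz : 0 < hz) (lam : ℝ)
    (E1n E2n E3n H1n H2n H3n E1a E2a E3a H1a H2a H3a
      E1b E2b E3b H1b H2b H3b E1c E2c E3c H1c H2c H3c
      E1f E2f E3f H1f H2f H3f : Fin I × Fin J × Fin K → ℝ)
    (θ : Fin I × Fin J × Fin K → ℝ)
    -- Stage 1: from (Eⁿ, Hⁿ) to (E^{[1]}, H^{[1]})
    (hs1E1 : E1a = E1n) (hs1H1 : H1a = H1n)
    (hs1x1 : ∀ (j : Fin J) (k : Fin K), stageRel I ε μ (-(τ / hx))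
      (fun i => E2n (i, j, k)) (fun i => E2a (i, j, k))
      (fun i => H3n (i, j, k)) (fun i => H3a (i, j, k)))
    (hs1x2 : ∀ (j : Fin J) (k : Fin K), stageRel I ε μ (τ / hx)
      (fun i => E3n (i, j, k)) (fun i => E3a (i, j, k))
      (fun i => H2n (i, j, k)) (fun i => H2a (i, j, k)))
    -- Stage 2: from (E^{[1]}, H^{[1]}) to (E^{[2]}, H^{[2]})
    (hs2E2 : E2b = E2a) (hs2H2 : H2b = H2a)
    (hs2y1 : ∀ (i : Fin I) (k : Fin K), stageRel J ε μ (-(τ / hy))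
      (fun j => E3a (i, j, k)) (fun j => E3b (i, j, k))
      (fun j => H1a (i, j, k)) (fun j => H1b (i, j, k)))
    (hs2y2 : ∀ (i : Fin I) (k : Fin K), stageRel J ε μ (τ / hy)
      (fun j => E1a (i, j, k)) (fun j => E1b (i, j, k))
      (fun j => H3a (i, j, k)) (fun j => H3b (i, j, k)))
    -- Stage 3: from (E^{[2]}, H^{[2]}) to (E^{[3]}, H^{[3]})
    (hs3E3 : E3c = E3b) (hs3H3 : H3c = H3b)
    (hs3z1 : ∀ (i : Fin I) (j : Fin J), stageRel K ε μ (-(τ / hz))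
      (fun k => E1b (i, j, k)) (fun k => E1c (i, j, k))
      (fun k => H2b (i, j, k)) (fun k => H2c (i, j, k)))
    (hs3z2 : ∀ (i : Fin I) (j : Fin J), stageRel K ε μ (τ / hz)
      (fun k => E2b (i, j, k)) (fun k => E2c (i, j, k))
      (fun k => H1b (i, j, k)) (fun k => H1c (i, j, k)))
    -- Stage 4: pointwise rotation by the noise increment
    (hs4E1 : ∀ p, E1f p = Real.cos (lam * θ p / Real.sqrt (ε * μ)) * E1c p -
      Real.sqrt (μ / ε) * Real.sin (lam * θ p / Real.sqrt (ε * μ)) * H1c p)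
    (hs4E2 : ∀ p, E2f p = Real.cos (lam * θ p / Real.sqrt (ε * μ)) * E2c p -
      Real.sqrt (μ / ε) * Real.sin (lam * θ p / Real.sqrt (ε * μ)) * H2c p)
    (hs4E3 : ∀ p, E3f p = Real.cos (lam * θ p / Real.sqrt (ε * μ)) * E3c p -
      Real.sqrt (μ / ε) * Real.sin (lam * θ p / Real.sqrt (ε * μ)) * H3c p)
    (hs4H1 : ∀ p, H1f p = Real.sqrt (ε / μ) *
      Real.sin (lam * θ p / Real.sqrt (ε * μ)) * E1c p +
      Real.cos (lam * θ p / Real.sqrt (ε * μ)) * H1c p)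
    (hs4H2 : ∀ p, H2f p = Real.sqrt (ε / μ) *
      Real.sin (lam * θ p / Real.sqrt (ε * μ)) * E2c p +
      Real.cos (lam * θ p / Real.sqrt (ε * μ)) * H2c p)
    (hs4H3 : ∀ p, H3f p = Real.sqrt (ε / μ) *
      Real.sin (lam * θ p / Real.sqrt (ε * μ)) * E3c p +
      Real.cos (lam * θ p / Real.sqrt (ε * μ)) * H3c p) :
    discreteEnergy ε μ E1f E2f E3f H1f H2f H3f =
      discreteEnergy ε μ E1n E2n E3n H1n H2n H3n :=
  splittingII_energy_conservation_general I J K hI hJ hK ε μ τ hx hy hz hε hμ lam E1n E2n E3n H1n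
    H2n H3n E1a E2a E3a H1a H2a H3a E1b E2b E3b H1b H2b H3b E1c E2c E3c H1c H2c H3c E1f E2f E3f H1f
    H2f H3f θ hs1E1 hs1H1 hs1x1 hs1x2 hs2E2 hs2H2 hs2y1 hs2y2 hs3E3 hs3H3 hs3z1 hs3z2 hs4E1 hs4E2
    hs4E3 hs4H1 hs4H2 hs4H3
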